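/- A family Λ = (Λ_i)_{i∈I} of bounded linear operators Λ_i : H → H_i is a g-frame for H (i.e. there exist 0 < A ≤ B < ∞ with A‖f‖² ≤ ∑_{i∈I} ‖Λ_i f‖² ≤ B‖f‖² for all f ∈ H) if and only if for every f ∈ H the family (Λ_i*(Λ_i f))_{i∈I} is summable in H and the resulting operator S_Λ : H → H, S_Λ f = ∑_{i∈I} Λ_i*Λ_i f, is bijective. In this case S_Λ is bounded. -/

import Mathlib

/-!
The frame operator `S = ∑ Λᵢ* Λᵢ` satisfies `re ⟪S f, f⟫ = ∑ ‖Λᵢ f‖²`, so the frame inequalities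
are the operator inequalities `A ≤ S ≤ B`. An upper bound makes the partial sums of `∑ Λᵢ* Λᵢ f`
Cauchy (Cauchy–Schwarz on finite sums), and a lower bound makes `S` coercive, hence invertible.
Conversely, if all the sums converge then `S` is bounded by Banach–Steinhaus and positive, and a
positive invertible operator is bounded below by the minimum of its spectrum.
-/

open ContinuousLinearMap RCLike
open scoped InnerProductSpace

theorem summable_of_norm_sq_sum_le {ι E : Type*} [NormedAddCommGroup E] [CompleteSpace E]
    {f : ι → E} {g : ι → ℝ} (hg : Summable g) {C : ℝ} (hC : 0 ≤ C)
    (h : ∀ t : Finset ι, ‖∑ i ∈ t, f i‖ ^ 2 ≤ C * ∑ i ∈ t, g i) : Summable f := by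
  rw [summable_iff_vanishing_norm]
  intro ε hε
  obtain ⟨s, hs⟩ := summable_iff_vanishing_norm.mp hg (ε ^ 2 / (C + 1)) (by positivity)
  refine ⟨s, fun t ht => lt_of_pow_lt_pow_left₀ 2 hε.le ?_⟩
  calc ‖∑ i ∈ t, f i‖ ^ 2 ≤ C * ∑ i ∈ t, g i := h t
    _ ≤ C * ‖∑ i ∈ t, g i‖ := mul_le_mul_of_nonneg_left (Real.le_norm_self _) hC
    _ ≤ C * (ε ^ 2 / (C + 1)) := by gcongr; exact (hs t ht).le
    _ < ε ^ 2 := by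
      rw [mul_div_assoc', div_lt_iff₀ (by positivity)]
      nlinarith [pow_pos hε 2]

theorem ContinuousLinearMap.IsPositive.exists_pos_mul_norm_sq_le_re_inner
    {H : Type*} [NormedAddCommGroup H] [InnerProductSpace ℂ H] [CompleteSpace H]
    {S : H →L[ℂ] H} (hS : S.IsPositive) (hunit : IsUnit S) :
    ∃ r > 0, ∀ x, r * ‖x‖ ^ 2 ≤ re ⟪S x, x⟫_ℂ := by
  cases subsingleton_or_nontrivial H with
  | inl _ => exact ⟨1, one_pos, fun x => by simp [Subsingleton.elim x 0]⟩
  | inr _ =>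
    have hpos : IsStrictlyPositive S :=
      hunit.isStrictlyPositive ((nonneg_iff_isPositive S).mpr hS)
    obtain ⟨r, hr, hle⟩ := (CFC.exists_pos_algebraMap_le_iff hpos.isSelfAdjoint).2
      fun x hx => hpos.spectrum_pos hx
    refine ⟨r, hr, fun x => ?_⟩
    simpa [Algebra.algebraMap_eq_smul_one, sub_apply, inner_sub_left, inner_smul_left,
      inner_self_eq_norm_sq_to_K, ← Complex.coe_smul, ← Complex.ofReal_pow, Complex.ofReal_re]
      using hle.re_inner_nonneg_left x

section FrameOperator

variable {H : Type*} [NormedAddCommGroup H] [InnerProductSpace ℂ H] [CompleteSpace H]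
  {ι : Type*} {G : ι → Type*} [∀ i, NormedAddCommGroup (G i)] [∀ i, InnerProductSpace ℂ (G i)]
  [∀ i, CompleteSpace (G i)] (Λ : ∀ i, H →L[ℂ] G i)

theorem norm_sq_sum_adjoint_apply_le (t : Finset ι) {B : ℝ} (hB0 : 0 ≤ B)
    (hB : ∀ v, ∑ i ∈ t, ‖Λ i v‖ ^ 2 ≤ B * ‖v‖ ^ 2) (f : H) :
    ‖∑ i ∈ t, adjoint (Λ i) (Λ i f)‖ ^ 2 ≤ B * ∑ i ∈ t, ‖Λ i f‖ ^ 2 := by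
  set v := ∑ i ∈ t, adjoint (Λ i) (Λ i f)
  have hv : ‖v‖ ^ 2 ≤ ∑ i ∈ t, ‖Λ i v‖ * ‖Λ i f‖ :=
    calc ‖v‖ ^ 2 = re ⟪v, v⟫_ℂ := (inner_self_eq_norm_sq v).symm
      _ = ∑ i ∈ t, re ⟪Λ i v, Λ i f⟫_ℂ := by
        simp only [v, inner_sum, adjoint_inner_right, map_sum]
      _ ≤ ∑ i ∈ t, ‖Λ i v‖ * ‖Λ i f‖ := Finset.sum_le_sum fun i _ => re_inner_le_norm _ _
  have hX : 0 ≤ ∑ i ∈ t, ‖Λ i f‖ ^ 2 := by positivity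
  have : (‖v‖ ^ 2) ^ 2 ≤ ‖v‖ ^ 2 * (B * ∑ i ∈ t, ‖Λ i f‖ ^ 2) :=
    calc (‖v‖ ^ 2) ^ 2 ≤ (∑ i ∈ t, ‖Λ i v‖ * ‖Λ i f‖) ^ 2 := by gcongr
      _ ≤ (∑ i ∈ t, ‖Λ i v‖ ^ 2) * ∑ i ∈ t, ‖Λ i f‖ ^ 2 := Finset.sum_mul_sq_le_sq_mul_sq t _ _
      _ ≤ B * ‖v‖ ^ 2 * ∑ i ∈ t, ‖Λ i f‖ ^ 2 := by gcongr; exact hB v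
      _ = ‖v‖ ^ 2 * (B * ∑ i ∈ t, ‖Λ i f‖ ^ 2) := by ring
  nlinarith [sq_nonneg ‖v‖, mul_nonneg hB0 hX]

theorem summable_adjoint_apply_of_frame_upper_bound {B : ℝ} (hB0 : 0 ≤ B)
    (hB : ∀ f : H, Summable (fun i => ‖Λ i f‖ ^ 2) ∧ ∑' i, ‖Λ i f‖ ^ 2 ≤ B * ‖f‖ ^ 2) (f : H) :
    Summable fun i => adjoint (Λ i) (Λ i f) :=
  summable_of_norm_sq_sum_le (hB f).1 hB0 fun t => norm_sq_sum_adjoint_apply_le Λ t hB0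
    (fun v => ((hB v).1.sum_le_tsum t fun _ _ => by positivity).trans (hB v).2) f

variable [Countable ι]

noncomputable def frameOperator (hΛ : ∀ f : H, Summable fun i => adjoint (Λ i) (Λ i f)) :
    H →L[ℂ] H :=
  continuousLinearMapOfTendsto (fun t : Finset ι => ∑ i ∈ t, adjoint (Λ i) ∘L Λ i)
    (tendsto_pi_nhds.2 fun f => by simp only [sum_apply, comp_apply]; exact (hΛ f).hasSum)

variable (hΛ : ∀ f : H, Summable fun i => adjoint (Λ i) (Λ i f))

theorem frameOperator_apply (f : H) : frameOperator Λ hΛ f = ∑' i, adjoint (Λ i) (Λ i f) := rfl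

theorem hasSum_inner_frameOperator (x y : H) :
    HasSum (fun i => ⟪Λ i x, Λ i y⟫_ℂ) ⟪x, frameOperator Λ hΛ y⟫_ℂ := by
  refine ((hΛ y).hasSum.mapL (innerSL ℂ x)).congr_fun fun i => ?_
  simp [adjoint_inner_right]

theorem isSymmetric_frameOperator : (frameOperator Λ hΛ).IsSymmetric := fun x y => by
  refine HasSum.unique ?_ (hasSum_inner_frameOperator Λ hΛ x y)
  simpa using Complex.hasSum_conj'.2 (hasSum_inner_frameOperator Λ hΛ y x)

theorem hasSum_norm_sq_frameOperator (f : H) :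
    HasSum (fun i => ‖Λ i f‖ ^ 2) (re ⟪frameOperator Λ hΛ f, f⟫_ℂ) := by
  rw [inner_re_symm]
  simpa [← Complex.ofReal_pow, Complex.ofReal_re] using
    (hasSum_inner_frameOperator Λ hΛ f f).mapL reCLM

theorem isPositive_frameOperator : (frameOperator Λ hΛ).IsPositive :=
  ⟨isSymmetric_frameOperator Λ hΛ, fun f =>
    (hasSum_norm_sq_frameOperator Λ hΛ f).nonneg fun _ => by positivity⟩

theorem bijective_frameOperator_of_frame_lower_bound {A : ℝ} (hA : 0 < A)
    (h : ∀ f : H, A * ‖f‖ ^ 2 ≤ ∑' i, ‖Λ i f‖ ^ 2) : Function.Bijective (frameOperator Λ hΛ) := by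
  refine isUnit_iff_bijective.1 <|
    isUnit_of_forall_le_norm_inner_map _ (c := ⟨A, hA.le⟩) hA fun x => ?_
  calc ‖x‖ ^ 2 * A = A * ‖x‖ ^ 2 := mul_comm _ _
    _ ≤ re ⟪frameOperator Λ hΛ x, x⟫_ℂ := (hasSum_norm_sq_frameOperator Λ hΛ x).tsum_eq ▸ h x
    _ ≤ ‖⟪frameOperator Λ hΛ x, x⟫_ℂ‖ := re_le_norm _

theorem exists_frame_bounds_of_bijective_frameOperator
    (hbij : Function.Bijective (frameOperator Λ hΛ)) :
    ∃ A B : ℝ, 0 < A ∧ A ≤ B ∧ ∀ f : H, Summable (fun i => ‖Λ i f‖ ^ 2) ∧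
      A * ‖f‖ ^ 2 ≤ ∑' i, ‖Λ i f‖ ^ 2 ∧ ∑' i, ‖Λ i f‖ ^ 2 ≤ B * ‖f‖ ^ 2 := by
  set S := frameOperator Λ hΛ
  obtain ⟨A, hA, hlower⟩ :=
    (isPositive_frameOperator Λ hΛ).exists_pos_mul_norm_sq_le_re_inner (isUnit_iff_bijective.2 hbij)
  refine ⟨A, max A ‖S‖, hA, le_max_left _ _, fun f => ?_⟩
  have hf := hasSum_norm_sq_frameOperator Λ hΛ f
  rw [hf.tsum_eq]
  refine ⟨hf.summable, hlower f, ?_⟩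
  calc re ⟪S f, f⟫_ℂ ≤ ‖S f‖ * ‖f‖ := re_inner_le_norm _ _
    _ ≤ ‖S‖ * ‖f‖ * ‖f‖ := by gcongr; exact S.le_opNorm f
    _ ≤ max A ‖S‖ * ‖f‖ ^ 2 := by rw [mul_assoc, ← sq]; gcongr; exact le_max_right _ _

end FrameOperator

/-- `Λ` is a g-frame for `H` iff for every `f ∈ H` the family
`(Λᵢ*(Λᵢ f))ᵢ` is summable in `H` and the resulting operator
`S_Λ f = ∑ᵢ Λᵢ*Λᵢ f` is bijective; in this case `S_Λ` is bounded. -/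
theorem gframe_iff_frameOperator_invertible
    {H : Type*} [NormedAddCommGroup H] [InnerProductSpace ℂ H] [CompleteSpace H]
    {ι : Type*} [Countable ι]
    {G : ι → Type*} [∀ i, NormedAddCommGroup (G i)] [∀ i, InnerProductSpace ℂ (G i)]
    [∀ i, CompleteSpace (G i)]
    (Λ : ∀ i, H →L[ℂ] G i) :
    ((∃ A B : ℝ, 0 < A ∧ A ≤ B ∧
        ∀ f : H, Summable (fun i => ‖Λ i f‖ ^ 2) ∧
          A * ‖f‖ ^ 2 ≤ ∑' i, ‖Λ i f‖ ^ 2 ∧ ∑' i, ‖Λ i f‖ ^ 2 ≤ B * ‖f‖ ^ 2) ↔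
      ((∀ f : H, Summable fun i => (ContinuousLinearMap.adjoint (Λ i)) (Λ i f)) ∧
        Function.Bijective
          (fun f : H => ∑' i, (ContinuousLinearMap.adjoint (Λ i)) (Λ i f)))) ∧
    ((∀ f : H, Summable fun i => (ContinuousLinearMap.adjoint (Λ i)) (Λ i f)) →
      ∃ S : H →L[ℂ] H, ∀ f : H,
        S f = ∑' i, (ContinuousLinearMap.adjoint (Λ i)) (Λ i f)) := by
  refine ⟨⟨?_, fun ⟨hΛ, hbij⟩ => exists_frame_bounds_of_bijective_frameOperator Λ hΛ hbij⟩,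
    fun hΛ => ⟨frameOperator Λ hΛ, frameOperator_apply Λ hΛ⟩⟩
  rintro ⟨A, B, hA, hAB, hframe⟩
  have hΛ := summable_adjoint_apply_of_frame_upper_bound Λ (hA.le.trans hAB)
    fun f => ⟨(hframe f).1, (hframe f).2.2⟩
  exact ⟨hΛ, bijective_frameOperator_of_frame_lower_bound Λ hΛ hA fun f => (hframe f).2.1⟩
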